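/- arXiv:2312.16742 — 2 statements merged into one kernel-verified Lean document; each statement's English description precedes it below -/
import Mathlib

section
/- For every integer τ₂ ≥ 3, setting v₁(τ₂) = (τ₂-1)³ + (τ₂-1)(3⌊(τ₂-1)/2⌋+1) - ⌊(τ₂-1)/2⌋² and v₂(τ₂) = v₁(τ₂) - (τ₂-1-⌊(τ₂-1)/2⌋)³, one has p(τ₂) := v₂(τ₂)/(τ₂³ - (v₁(τ₂) - v₂(τ₂))) > 1/2. -/
/-- With `k = ⌊n/2⌋` this is `2 v₁ > τ₂³ + (v₁ - v₂)` for `n = τ₂ - 1`; writing `n = 2k` or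
`n = 2k + 1`, the difference is `7k³ - 2k² - 2k - 1` or `(7k² - 5)(k + 1)` respectively. -/
lemma cube_add_cube_lt_two_mul (n k : ℤ) (hn : 2 ≤ n) (hk : k = n / 2) :
    (n + 1) ^ 3 + (n - k) ^ 3 < 2 * (n ^ 3 + n * (3 * k + 1) - k ^ 2) := by
  obtain ⟨m, rfl | rfl⟩ := Int.even_or_odd' n
  · obtain rfl : k = m := by omega
    have hk : 1 ≤ k := by omega
    nlinarith [mul_le_mul_of_nonneg_left hk (sq_nonneg k)]
  · obtain rfl : k = m := by omega
    have hk : 1 ≤ k := by omega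
    nlinarith [mul_le_mul_of_nonneg_left hk (sq_nonneg k)]

lemma one_half_lt_div_of_lt_two_mul {a d : ℝ} (hd : 0 < d) (h : d < 2 * a) : 1 / 2 < a / d := by
  rw [lt_div_iff₀ hd]
  linarith

theorem stmt3 (τ₂ : ℤ) (h : 3 ≤ τ₂) (k v₁ v₂ : ℤ) (hk : k = (τ₂ - 1) / 2)
    (hv₁ : v₁ = (τ₂ - 1) ^ 3 + (τ₂ - 1) * (3 * k + 1) - k ^ 2)
    (hv₂ : v₂ = v₁ - (τ₂ - 1 - k) ^ 3) :
    (v₂ : ℝ) / ((τ₂ : ℝ) ^ 3 - ((v₁ - v₂ : ℤ) : ℝ)) > 1 / 2 := by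
  have hdiff : v₁ - v₂ = (τ₂ - 1 - k) ^ 3 := by rw [hv₂]; ring
  have hpos : 0 < τ₂ ^ 3 - (v₁ - v₂) := by
    rw [hdiff, sub_pos]
    exact pow_lt_pow_left₀ (by omega) (by omega) three_ne_zero
  have hlt : τ₂ ^ 3 - (v₁ - v₂) < 2 * v₂ := by
    have := cube_add_cube_lt_two_mul (τ₂ - 1) k (by omega) hk
    rw [hdiff, hv₂, hv₁]
    rw [sub_add_cancel, ← hv₁] at this
    linarith
  exact one_half_lt_div_of_lt_two_mul (by exact_mod_cast hpos) (by exact_mod_cast hlt)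
end

section
/- Define S(n) = E₁(n) + E₂(n) + E₃(n) + 3c₂(n), where, with k = ⌊(n-1)/2⌋, p ∈ (1/2, 1) any real with p > 1/2 (and p > 2/3 for n ≥ 5), c₁ - c₂ = 2 - (k+1)/n, c₂ = -(1 - k/n), E₁ = p(2 - (k+1)/n), E₂ = (c₁-c₂)·(1/n)(p(n-1-k)+k), E₃ = (c₁-c₂)·(1/n²)(p((n-1)² - k(2(n-1)-k)) + k(2n-1-k)). Then S(n) > 0 for every integer n ≥ 3. -/
/-!
Clearing denominators, `S` is a rational function whose numerator, on each parity class of `n`,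
splits as `(p - 1/2)` times a positive polynomial plus a multiple of `n - 4` (even `n`) or of
`n - 3` (odd `n`). Both parts are nonnegative for `n ≥ 3` and the first is positive since
`p > 1/2`.
-/

/-- The paper's `S(n) = E₁ + E₂ + E₃ + 3c₂`, with `k = ⌊(n-1)/2⌋` kept as a separate variable. -/
noncomputable def S (n k p : ℝ) : ℝ :=
  p * (2 - (k + 1) / n) + (2 - (k + 1) / n) * (1 / n) * (p * (n - 1 - k) + k)
    + (2 - (k + 1) / n) * (1 / n ^ 2) * (p * ((n - 1) ^ 2 - k * (2 * (n - 1) - k))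
      + k * (2 * n - 1 - k))
    + 3 * (-(1 - k / n))

lemma S_two_mul (m p : ℝ) (hm : m ≠ 0) :
    S (2 * m) (m - 1) p = (21 * (p - 1 / 2) * m + 27 / 2 * (m - 2)) / (8 * m) := by
  unfold S
  field_simp
  ring

lemma S_two_mul_add_one (m p : ℝ) (hm : 2 * m + 1 ≠ 0) :
    S (2 * m + 1) m p = ((p - 1 / 2) * (21 * m ^ 3 + 22 * m ^ 2 + 8 * m + 1)
      + (m - 1) * (27 * m ^ 2 + 23 * m + 5) / 2) / (2 * m + 1) ^ 3 := by
  unfold S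
  field_simp
  ring

lemma S_two_mul_pos {m p : ℝ} (hm : 2 ≤ m) (hp : 1 / 2 < p) : 0 < S (2 * m) (m - 1) p := by
  rw [S_two_mul m p (by positivity)]
  have hp' : 0 < p - 1 / 2 := sub_pos.mpr hp
  have hm' : 0 ≤ m - 2 := sub_nonneg.mpr hm
  apply div_pos _ (by positivity)
  positivity

lemma S_two_mul_add_one_pos {m p : ℝ} (hm : 1 ≤ m) (hp : 1 / 2 < p) :
    0 < S (2 * m + 1) m p := by
  rw [S_two_mul_add_one m p (by positivity)]
  have hp' : 0 < p - 1 / 2 := sub_pos.mpr hp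
  have hm' : 0 ≤ m - 1 := sub_nonneg.mpr hm
  apply div_pos _ (by positivity)
  positivity

theorem stmt9_general (n : ℤ) (hn : 3 ≤ n) (k : ℤ) (hk : k = (n - 1) / 2)
    (p : ℝ) (hp : 1 / 2 < p) :
    p * (2 - ((k : ℝ) + 1) / (n : ℝ))
      + (2 - ((k : ℝ) + 1) / (n : ℝ)) * (1 / (n : ℝ))
          * (p * ((n : ℝ) - 1 - (k : ℝ)) + (k : ℝ))
      + (2 - ((k : ℝ) + 1) / (n : ℝ)) * (1 / (n : ℝ) ^ 2)
          * (p * (((n : ℝ) - 1) ^ 2 - (k : ℝ) * (2 * ((n : ℝ) - 1) - (k : ℝ)))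
              + (k : ℝ) * (2 * (n : ℝ) - 1 - (k : ℝ)))
      + 3 * (-(1 - (k : ℝ) / (n : ℝ))) > 0 := by
  change 0 < S n k p
  rcases Int.even_or_odd' n with ⟨m, rfl | rfl⟩
  · obtain rfl : k = m - 1 := by omega
    have hm : (2 : ℝ) ≤ m := by exact_mod_cast (by omega : 2 ≤ m)
    simpa using S_two_mul_pos hm hp
  · obtain rfl : m = k := by omega
    have hm : (1 : ℝ) ≤ m := by exact_mod_cast (by omega : 1 ≤ m)
    simpa using S_two_mul_add_one_pos hm hp

theorem stmt9 (n : ℤ) (hn : 3 ≤ n) (k : ℤ) (hk : k = (n - 1) / 2)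
    (p : ℝ) (hp : 1 / 2 < p) (hp1 : p < 1) (hp5 : 5 ≤ n → 2 / 3 < p) :
    p * (2 - ((k : ℝ) + 1) / (n : ℝ))
      + (2 - ((k : ℝ) + 1) / (n : ℝ)) * (1 / (n : ℝ))
          * (p * ((n : ℝ) - 1 - (k : ℝ)) + (k : ℝ))
      + (2 - ((k : ℝ) + 1) / (n : ℝ)) * (1 / (n : ℝ) ^ 2)
          * (p * (((n : ℝ) - 1) ^ 2 - (k : ℝ) * (2 * ((n : ℝ) - 1) - (k : ℝ)))
              + (k : ℝ) * (2 * (n : ℝ) - 1 - (k : ℝ)))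
      + 3 * (-(1 - (k : ℝ) / (n : ℝ))) > 0 :=
  stmt9_general n hn k hk p hp
end
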